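/- arXiv:2003.08521 — 3 statements merged into one kernel-verified Lean document; each statement's English description precedes it below -/
import Mathlib

section
/- Let k ≥ 1. The tropical hyperplane Y is contained in the amoeba of the pair-of-pants: Y ⊆ Log(H), where H = {y ∈ (ℂ*)^k : 1 + y₁ + ⋯ + y_k = 0}. That is, for every x ∈ ℝ^k such that max{0, x₁, …, x_k} is attained by at least two of the terms 0, x₁, …, x_k, there exists y ∈ (ℂ*)^k with 1 + y₁ + ⋯ + y_k = 0 and log|y_i| = x_i for all i. -/
/-- The list of the `k+1` terms `0, x₁, …, x_k`. -/
def termsWithZero {k : ℕ} (x : Fin k → ℝ) : Fin (k + 1) → ℝ := Fin.cons 0 x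

/-- The tropical hyperplane `Y ⊆ ℝ^k`: the set of points where the maximum of the `k+1`
terms `0, x₁, …, x_k` is attained by at least two of them. -/
def tropicalHyperplane (k : ℕ) : Set (Fin k → ℝ) :=
  {x | ∃ i j : Fin (k + 1), i ≠ j ∧
    termsWithZero x i = termsWithZero x j ∧
    ∀ m, termsWithZero x m ≤ termsWithZero x i}

/-!
If the numbers `e^{t_m}`, for the terms `t_m` of `0, x₁, …, x_k`, are the moduli of complex
numbers `z_m` summing to zero, then `y_m = z_m / z_0` works, since `|z_0| = e^0 = 1`.
Let `R = e^{t_i} = e^{t_j}` be the largest modulus. Giving the other moduli real signs greedily,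
each one moving the partial sum towards `0`, keeps their sum `S` in `[-R, R]`, and the two
numbers `-S/2 ± i √(R² - S²/4)` of modulus `R` cancel it.
-/

open Finset

theorem exists_abs_eq_abs_and_abs_sum_le {ι : Type*} (s : Finset ι) (a : ι → ℝ) {R : ℝ}
    (hR : 0 ≤ R) (haR : ∀ m ∈ s, |a m| ≤ R) :
    ∃ b : ι → ℝ, (∀ m, |b m| = |a m|) ∧ |∑ m ∈ s, b m| ≤ R := by
  classical
  induction s using Finset.induction_on with
  | empty => exact ⟨a, fun _ => rfl, by simpa using hR⟩
  | insert n s hn ih =>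
    obtain ⟨b, hb, hsum⟩ := ih fun m hm => haR m (mem_insert_of_mem hm)
    have han := haR n (mem_insert_self n s)
    let c := if 0 ≤ ∑ m ∈ s, b m then -|a n| else |a n|
    refine ⟨Function.update b n c, fun m => ?_, ?_⟩
    · rcases eq_or_ne m n with rfl | hm
      · by_cases h : 0 ≤ ∑ m ∈ s, b m <;> simp [c, h]
      · simp [hm, hb]
    · rw [sum_insert hn, Function.update_self, sum_update_of_notMem hn]
      rw [abs_le] at hsum ⊢
      by_cases h : 0 ≤ ∑ m ∈ s, b m
      · simp only [c, if_pos h]; constructor <;> linarith [abs_nonneg (a n)]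
      · simp only [c, if_neg h]; constructor <;> linarith [abs_nonneg (a n)]

theorem exists_norm_eq_add_eq_ofReal {R S : ℝ} (hR : 0 ≤ R) (hS : |S| ≤ 2 * R) :
    ∃ z w : ℂ, ‖z‖ = R ∧ ‖w‖ = R ∧ z + w = S := by
  have hS2 : (S / 2) ^ 2 ≤ R ^ 2 := by
    rw [div_pow, ← sq_abs]; nlinarith [abs_nonneg S]
  set q := √(R ^ 2 - (S / 2) ^ 2)
  have hq : q ^ 2 = R ^ 2 - (S / 2) ^ 2 := Real.sq_sqrt (by linarith)
  refine ⟨(S / 2 : ℝ) + (q : ℂ) * Complex.I, (S / 2 : ℝ) + ((-q : ℝ) : ℂ) * Complex.I,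
    ?_, ?_, ?_⟩
  · rw [Complex.norm_add_mul_I, hq, add_sub_cancel, Real.sqrt_sq hR]
  · rw [Complex.norm_add_mul_I, neg_sq, hq, add_sub_cancel, Real.sqrt_sq hR]
  · push_cast; ring

theorem exists_norm_eq_sum_eq_zero_of_max_attained_twice {ι : Type*} [Fintype ι]
    (a : ι → ℝ) {i j : ι} (hij : i ≠ j) (ha : ∀ m, 0 ≤ a m) (haij : a i = a j)
    (hmax : ∀ m, a m ≤ a i) :
    ∃ z : ι → ℂ, (∀ m, ‖z m‖ = a m) ∧ ∑ m, z m = 0 := by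
  classical
  let s := (univ.erase i).erase j
  obtain ⟨b, hb, hsum⟩ := exists_abs_eq_abs_and_abs_sum_le s a (ha i)
    fun m _ => (abs_of_nonneg (ha m)).trans_le (hmax m)
  obtain ⟨zi, zj, hzi, hzj, hzij⟩ := exists_norm_eq_add_eq_ofReal (ha i)
    (show |-∑ m ∈ s, b m| ≤ 2 * a i by rw [abs_neg]; linarith [ha i])
  let z : ι → ℂ := fun m => if m = i then zi else if m = j then zj else (b m : ℂ)
  have hz_i : z i = zi := if_pos rfl
  have hz_j : z j = zj := by simp [z, hij.symm]
  have hz_s : ∀ m ∈ s, z m = b m := fun m hm => by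
    obtain ⟨hmj, hmi⟩ : m ≠ j ∧ m ≠ i := by simpa [s] using hm
    simp [z, hmi, hmj]
  refine ⟨z, fun m => ?_, ?_⟩
  · by_cases hmi : m = i
    · rw [hmi, hz_i, hzi]
    by_cases hmj : m = j
    · rw [hmj, hz_j, hzj, haij]
    rw [hz_s m (by simp [s, hmi, hmj]), Complex.norm_real, Real.norm_eq_abs, hb,
      abs_of_nonneg (ha m)]
  · have hj : j ∈ univ.erase i := mem_erase.2 ⟨hij.symm, mem_univ j⟩
    rw [← add_sum_erase _ _ (mem_univ i), ← add_sum_erase _ _ hj, hz_i, hz_j,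
      sum_congr rfl hz_s, ← add_assoc, hzij]
    push_cast; ring

theorem tropicalHyperplane_subset_amoeba_general (k : ℕ) :
    ∀ x ∈ tropicalHyperplane k,
      ∃ y : Fin k → ℂ, (∀ i, y i ≠ 0) ∧ 1 + ∑ i, y i = 0 ∧
        ∀ i, Real.log ‖y i‖ = x i := by
  rintro x ⟨i, j, hij, heq, hmax⟩
  obtain ⟨z, hz, hsum⟩ := exists_norm_eq_sum_eq_zero_of_max_attained_twice
    (fun m => Real.exp (termsWithZero x m)) hij (fun _ => (Real.exp_pos _).le)
    (by rw [heq]) fun m => Real.exp_le_exp.2 (hmax m)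
  have hz0 : ‖z 0‖ = 1 := by simpa [termsWithZero] using hz 0
  have hz0_ne : z 0 ≠ 0 := norm_ne_zero_iff.1 (by rw [hz0]; exact one_ne_zero)
  have hzsucc (n : Fin k) : ‖z n.succ‖ = Real.exp (x n) := by
    simpa [termsWithZero] using hz n.succ
  refine ⟨fun n => z n.succ / z 0, fun n => div_ne_zero ?_ hz0_ne, ?_, fun n => ?_⟩
  · rw [← norm_ne_zero_iff, hzsucc]; exact (Real.exp_pos _).ne'
  · rw [← div_self hz0_ne, ← sum_div, ← add_div, ← Fin.sum_univ_succ, hsum, zero_div]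
  · rw [norm_div, hz0, div_one, hzsucc, Real.log_exp]

/-- For `k ≥ 1`, the tropical hyperplane is contained in the amoeba of
the pair-of-pants: for every `x ∈ Y` there is `y ∈ (ℂ*)^k` with `1 + y₁ + ⋯ + y_k = 0`
and `log|y_i| = x_i` for all `i`. -/
theorem tropicalHyperplane_subset_amoeba (k : ℕ) (hk : 1 ≤ k) :
    ∀ x ∈ tropicalHyperplane k,
      ∃ y : Fin k → ℂ, (∀ i, y i ≠ 0) ∧ 1 + ∑ i, y i = 0 ∧
        ∀ i, Real.log ‖y i‖ = x i :=
  tropicalHyperplane_subset_amoeba_general k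
end

section
/- Let Z be a locally compact Hausdorff space, C ⊆ Z a closed subset, X a Hausdorff space, and f : X → Z a continuous map whose image is contained in Z ∖ C and which is proper as a map into the subspace Z ∖ C (preimages of compact subsets of Z ∖ C are compact). Then there exist a Hausdorff topological space X̄, an open embedding ι : X → X̄, and a proper continuous map f̄ : X̄ → Z with f̄ ∘ ι = f, such that f̄ restricts to a homeomorphism from X̄ ∖ ι(X) (with the subspace topology) onto C. In other words, f can be compactified over C by adding a single point in each fiber over C so that the extended map is proper. -/
universe u

/-- `(Xb, tb, ι, fb)` is a proper extension of `f : X → Z` over the closed set `C`: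
`Xb` is Hausdorff, `ι` is an open embedding, `fb` is a proper continuous map with
`fb ∘ ι = f`, and `fb` restricts to a homeomorphism from `Xb ∖ ι(X)` onto `C`. -/
def IsProperOnePointedExtension {X Z : Type u} [TopologicalSpace X]
    [TopologicalSpace Z] (C : Set Z) (f : X → Z)
    (Xb : Type u) (tb : TopologicalSpace Xb) (ι : X → Xb) (fb : Xb → Z) : Prop :=
  letI := tb
  T2Space Xb ∧ Topology.IsOpenEmbedding ι ∧ Continuous fb ∧
    (∀ K : Set Z, IsCompact K → IsCompact (fb ⁻¹' K)) ∧
    fb ∘ ι = f ∧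
    ∃ e : ((Set.range ι)ᶜ : Set Xb) ≃ₜ C,
      ∀ p : ((Set.range ι)ᶜ : Set Xb), (e p : Z) = fb p.1

/-!
Take `X̄ ⊆ X∞ × Z`, where `X∞` is the one-point compactification of `X`, to be the graph of `f`
together with `{∞} × C`, and `f̄` the second projection. Every `z ∉ C` has a compact
neighbourhood `K ⊆ Z ∖ C`, and `f⁻¹ K` is compact; so `(X∞ ∖ f⁻¹ K) × K` is a neighbourhood of
`(∞, z)` missing `X̄`, which makes `X̄` closed. Hence `f̄` is proper, being the restriction to a
closed set of a projection with compact fibre `X∞`. The sets `f⁻¹ K` are also compact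
neighbourhoods in `X`, so `X` is locally compact and `X∞`, hence `X̄`, is Hausdorff.
-/

open Set Filter Topology OnePoint

section

variable {X Z : Type*} [TopologicalSpace X] [TopologicalSpace Z] {f : X → Z}

lemma WeaklyLocallyCompactSpace.of_isCompact_preimage_mem_nhds (hf : Continuous f)
    (h : ∀ x, ∃ K ∈ 𝓝 (f x), IsCompact (f ⁻¹' K)) : WeaklyLocallyCompactSpace X where
  exists_compact_mem_nhds x :=
    let ⟨_, hK, hfK⟩ := h x
    ⟨_, hfK, hf.continuousAt.preimage_mem_nhds hK⟩

lemma exists_mem_nhds_disjoint_isCompact_preimage [LocallyCompactSpace Z] {C : Set Z}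
    (hC : IsClosed C) (hproper : ∀ K : Set Z, IsCompact K → Disjoint K C → IsCompact (f ⁻¹' K))
    {z : Z} (hz : z ∉ C) : ∃ K ∈ 𝓝 z, Disjoint K C ∧ IsCompact (f ⁻¹' K) := by
  obtain ⟨K, hKz, hKC, hK⟩ := local_compact_nhds (hC.isOpen_compl.mem_nhds hz)
  have hdisj : Disjoint K C := subset_compl_iff_disjoint_right.1 hKC
  exact ⟨K, hKz, hdisj, hproper K hK hdisj⟩

end

def compactifiedGraph {X Z : Type*} (C : Set Z) (f : X → Z) : Set (OnePoint X × Z) :=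
  range (fun x : X ↦ ((x : OnePoint X), f x)) ∪ {∞} ×ˢ C

lemma isClosed_compactifiedGraph {X Z : Type*} [TopologicalSpace X] [T2Space X]
    [TopologicalSpace Z] [T2Space Z] (C : Set Z) {f : X → Z} (hf : Continuous f)
    (hnhds : ∀ z ∉ C, ∃ K ∈ 𝓝 z, Disjoint K C ∧ IsCompact (f ⁻¹' K)) :
    IsClosed (compactifiedGraph C f) := by
  refine isOpen_compl_iff.1 <| isOpen_iff_mem_nhds.2 ?_
  rintro ⟨p, z⟩ hpz
  induction p using OnePoint.rec with
  | infty =>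
    obtain ⟨K, hKz, hKC, hK⟩ := hnhds z fun hz ↦ hpz (Or.inr ⟨rfl, hz⟩)
    have hU : ((↑) '' (f ⁻¹' K) : Set (OnePoint X))ᶜ ∈ 𝓝 ∞ :=
      (isOpen_compl_image_coe.2 ⟨hK.isClosed, hK⟩).mem_nhds infty_notMem_image_coe
    filter_upwards [prod_mem_nhds hU hKz]
    rintro ⟨p', z'⟩ ⟨hp', hz'⟩ (⟨x, hx⟩ | ⟨-, hz'C⟩)
    · obtain ⟨rfl, rfl⟩ := Prod.ext_iff.1 hx
      exact hp' ⟨x, hz', rfl⟩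
    · exact hKC.ne_of_mem hz' hz'C rfl
  | coe x =>
    have hopen : IsOpen (Prod.map ((↑) : X → OnePoint X) id '' {q : X × Z | q.2 ≠ f q.1}) :=
      (isOpenEmbedding_coe.prodMap .id).isOpenMap _
        (isOpen_ne_fun continuous_snd (hf.comp continuous_fst))
    refine mem_of_superset
      (hopen.mem_nhds ⟨(x, z), fun h ↦ hpz (Or.inl ⟨x, congrArg _ h.symm⟩), rfl⟩) ?_
    rintro _ ⟨⟨x', z'⟩, hz', rfl⟩ (⟨x'', hx''⟩ | ⟨hinf, -⟩)
    · obtain ⟨hx, rfl⟩ := Prod.ext_iff.1 hx''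
      exact hz' (coe_injective hx ▸ rfl)
    · exact coe_ne_infty x' hinf

namespace compactifiedGraph

variable {X Z : Type*} (C : Set Z) {f : X → Z}

variable (f) in
def incl (x : X) : compactifiedGraph C f :=
  ⟨((x : OnePoint X), f x), Or.inl (mem_range_self x)⟩

lemma mem_of_notMem_range_incl {p : compactifiedGraph C f} (hp : p ∉ range (incl C f)) :
    p.1 ∈ ({∞} : Set (OnePoint X)) ×ˢ C :=
  p.2.resolve_left fun ⟨x, hx⟩ ↦ hp ⟨x, Subtype.ext hx⟩

lemma range_incl :
    range (incl C f) = Subtype.val ⁻¹' (range ((↑) : X → OnePoint X) ×ˢ univ) := by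
  refine Subset.antisymm ?_ fun p ⟨⟨x, hx⟩, _⟩ ↦ ?_
  · rintro _ ⟨x, rfl⟩
    exact ⟨mem_range_self x, trivial⟩
  · by_contra hp
    exact coe_ne_infty x (hx.trans (mem_of_notMem_range_incl C hp).1)

variable [TopologicalSpace X] [TopologicalSpace Z]

lemma isOpenEmbedding_incl (hf : Continuous f) : IsOpenEmbedding (incl C f) where
  toIsEmbedding :=
    ((isOpenEmbedding_coe.prodMap .id).isEmbedding.comp (isEmbedding_graph hf)).codRestrict _
      fun x ↦ (incl C f x).2
  isOpen_range := by
    rw [range_incl]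
    exact (isOpen_range_coe.prod isOpen_univ).preimage continuous_subtype_val

variable (f) in
def complRangeHomeomorph : ((range (incl C f))ᶜ : Set (compactifiedGraph C f)) ≃ₜ C where
  toFun p := ⟨p.1.1.2, (mem_of_notMem_range_incl C p.2).2⟩
  invFun c := ⟨⟨(∞, c), Or.inr ⟨rfl, c.2⟩⟩, fun ⟨x, hx⟩ ↦ coe_ne_infty x (congrArg (·.1.1) hx)⟩
  left_inv p := Subtype.ext <| Subtype.ext <| Prod.ext (mem_of_notMem_range_incl C p.2).1.symm rfl
  right_inv _ := rfl
  continuous_toFun := by fun_prop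
  continuous_invFun := by fun_prop

end compactifiedGraph

open compactifiedGraph in
/-- Let `Z` be locally compact Hausdorff, `C ⊆ Z` closed, `X`
Hausdorff, and `f : X → Z` continuous with image in `Z ∖ C` and proper as a map into
`Z ∖ C`. Then `f` admits a proper extension `f̄ : X̄ → Z` obtained by adjoining `C`:
`ι : X → X̄` is an open embedding, `f̄ ∘ ι = f`, `f̄` is proper, and `f̄` restricts to a
homeomorphism from `X̄ ∖ ι(X)` onto `C`. -/
theorem exists_proper_compactification_over_closed_set
    {X Z : Type u} [TopologicalSpace X] [T2Space X]
    [TopologicalSpace Z] [T2Space Z] [LocallyCompactSpace Z]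
    (C : Set Z) (hC : IsClosed C) (f : X → Z) (hf : Continuous f)
    (hrange : ∀ x, f x ∉ C)
    (hproper : ∀ K : Set Z, IsCompact K → Disjoint K C → IsCompact (f ⁻¹' K)) :
    ∃ (Xb : Type u) (tb : TopologicalSpace Xb) (ι : X → Xb) (fb : Xb → Z),
      IsProperOnePointedExtension C f Xb tb ι fb := by
  have hnhds := fun z (hz : z ∉ C) ↦ exists_mem_nhds_disjoint_isCompact_preimage hC hproper hz
  have : WeaklyLocallyCompactSpace X := .of_isCompact_preimage_mem_nhds hf fun x ↦
    let ⟨K, hK, _, hfK⟩ := hnhds _ (hrange x)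
    ⟨K, hK, hfK⟩
  have hproperSnd : IsProperMap fun p : compactifiedGraph C f ↦ p.1.2 :=
    isProperMap_snd_of_compactSpace.comp
      (isClosed_compactifiedGraph C hf hnhds).isProperMap_subtypeVal
  exact ⟨compactifiedGraph C f, inferInstance, incl C f, fun p ↦ p.1.2, inferInstance,
    isOpenEmbedding_incl C hf, hproperSnd.continuous, fun _ ↦ hproperSnd.isCompact_preimage,
    rfl, complRangeHomeomorph C f, fun _ ↦ rfl⟩
end

section
/- Let Z be a locally compact Hausdorff space, C ⊆ Z a closed subset, X a topological space, and f : X → Z a continuous map whose image is contained in Z ∖ C and which is proper as a map into Z ∖ C. Suppose for i = 1, 2 we are given a Hausdorff space X̄_i, an open embedding ι_i : X → X̄_i, and a proper continuous map f̄_i : X̄_i → Z with f̄_i ∘ ι_i = f, such that f̄_i restricts to a bijection from X̄_i ∖ ι_i(X) onto C. Then there is a unique homeomorphism h : X̄_1 → X̄_2 with h ∘ ι_1 = ι_2 and f̄_2 ∘ h = f̄_1. In other words, a proper compactification obtained by adding one point per fiber over C is unique up to a unique homeomorphism over Z. -/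
universe u


theorem proper_tube {X2 Z : Type u} [TopologicalSpace X2] [TopologicalSpace Z]
    [T2Space Z] [LocallyCompactSpace Z] {f2 : X2 → Z} (hf2 : Continuous f2)
    (hprop : ∀ K : Set Z, IsCompact K → IsCompact (f2 ⁻¹' K)) (z : Z) {V : Set X2}
    (hV : IsOpen V) (hfib : f2 ⁻¹' {z} ⊆ V) : ∃ W ∈ nhds z, f2 ⁻¹' W ⊆ V := by
  obtain ⟨K, hK, hKz⟩ := exists_compact_mem_nhds z
  have hdiff : IsCompact (f2 ⁻¹' K \ V) := (hprop K hK).diff hV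
  have himg : IsCompact (f2 '' (f2 ⁻¹' K \ V)) := hdiff.image hf2
  have hz : z ∉ f2 '' (f2 ⁻¹' K \ V) := by
    rintro ⟨u, ⟨huK, huV⟩, rfl⟩
    exact huV (hfib rfl)
  refine ⟨K ∩ (f2 '' (f2 ⁻¹' K \ V))ᶜ, Filter.inter_mem hKz
    (himg.isClosed.isOpen_compl.mem_nhds hz), ?_⟩
  rintro u ⟨huK, huS⟩
  by_contra huV
  exact huS ⟨u, ⟨huK, huV⟩, rfl⟩

theorem aux_exists {X Z X1 X2 : Type u} [TopologicalSpace X] [TopologicalSpace Z]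
    [T2Space Z] [LocallyCompactSpace Z] [TopologicalSpace X1] [TopologicalSpace X2]
    (C : Set Z) (f : X → Z) (hrange : ∀ x, f x ∉ C)
    (ι₁ : X → X1) (f1 : X1 → Z) (hι₁ : Topology.IsOpenEmbedding ι₁)
    (hf1 : Continuous f1) (hcomm1 : f1 ∘ ι₁ = f)
    (hbij1into : ∀ p, p ∉ Set.range ι₁ → f1 p ∈ C)
    (ι₂ : X → X2) (f2 : X2 → Z) (hι₂cont : Continuous ι₂) (hf2 : Continuous f2)
    (hf2proper : ∀ K : Set Z, IsCompact K → IsCompact (f2 ⁻¹' K))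
    (hcomm2 : f2 ∘ ι₂ = f)
    (hbij2 : Set.BijOn f2 ((Set.range ι₂)ᶜ) C) :
    ∃ g : X1 → X2, Continuous g ∧ (∀ x, g (ι₁ x) = ι₂ x) ∧
      (∀ p, f2 (g p) = f1 p) ∧ (∀ p, p ∉ Set.range ι₁ → g p ∉ Set.range ι₂) := by
  classical
  have hsur : ∀ p, p ∉ Set.range ι₁ → ∃ q, q ∉ Set.range ι₂ ∧ f2 q = f1 p := by
    intro p hp
    rcases hbij2.surjOn (hbij1into p hp) with ⟨q, hq, hq'⟩
    exact ⟨q, hq, hq'⟩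
  choose σ hσ1 hσ2 using hsur
  set g : X1 → X2 := fun p => if hp : p ∈ Set.range ι₁ then ι₂ hp.choose else σ p hp
    with hg
  have hgι : ∀ x, g (ι₁ x) = ι₂ x := by
    intro x
    have hp : ι₁ x ∈ Set.range ι₁ := ⟨x, rfl⟩
    have : g (ι₁ x) = ι₂ hp.choose := by rw [hg]; exact dif_pos hp
    rw [this]
    exact congrArg ι₂ (hι₁.injective hp.choose_spec)
  have hgf : ∀ p, f2 (g p) = f1 p := by
    intro p
    by_cases hp : p ∈ Set.range ι₁
    · obtain ⟨x, rfl⟩ := hp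
      rw [hgι x]
      calc f2 (ι₂ x) = f x := congrFun hcomm2 x
        _ = f1 (ι₁ x) := (congrFun hcomm1 x).symm
    · have : g p = σ p hp := by rw [hg]; exact dif_neg hp
      rw [this]; exact hσ2 p hp
  have hgc : ∀ p, p ∉ Set.range ι₁ → g p ∉ Set.range ι₂ := by
    intro p hp
    have : g p = σ p hp := by rw [hg]; exact dif_neg hp
    rw [this]; exact hσ1 p hp
  have hcont : Continuous g := by
    rw [continuous_iff_continuousAt]
    intro p
    by_cases hp : p ∈ Set.range ι₁
    · obtain ⟨x, rfl⟩ := hp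
      have : (g ∘ ι₁) = ι₂ := funext hgι
      have h2 : ContinuousAt (g ∘ ι₁) x := by rw [this]; exact hι₂cont.continuousAt
      exact hι₁.continuousAt_iff.1 h2
    · -- boundary point
      rw [ContinuousAt, Filter.tendsto_def]
      intro s hs
      rcases mem_nhds_iff.1 hs with ⟨V, hVs, hVo, hgV⟩
      have hfib : f2 ⁻¹' {f1 p} ⊆ V := by
        intro u hu
        have hu' : f2 u = f1 p := hu
        have hu2 : u ∉ Set.range ι₂ := by
          rintro ⟨y, rfl⟩
          have : f y = f1 p := by rw [← congrFun hcomm2 y]; exact hu'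
          exact hrange y (this ▸ hbij1into p hp)
        have : u = g p := hbij2.injOn hu2 (hgc p hp) (by rw [hu', hgf p])
        rw [this]; exact hgV
      obtain ⟨W, hW, hWV⟩ := proper_tube hf2 hf2proper (f1 p) hVo hfib
      refine Filter.mem_of_superset (hf1.continuousAt.preimage_mem_nhds hW) ?_
      intro u hu
      exact hVs (hWV (show f2 (g u) ∈ W by rw [hgf u]; exact hu))
  exact ⟨g, hcont, hgι, hgf, hgc⟩

/-- Let `Z` be locally compact Hausdorff, `C ⊆ Z` closed, and
`f : X → Z` continuous with image in `Z ∖ C` and proper as a map into `Z ∖ C`. Given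
two Hausdorff extensions `(X̄ᵢ, ιᵢ, f̄ᵢ)` of `f` — `ιᵢ` an open embedding, `f̄ᵢ` proper
continuous with `f̄ᵢ ∘ ιᵢ = f`, and `f̄ᵢ` restricting to a bijection from `X̄ᵢ ∖ ιᵢ(X)`
onto `C` — there is a unique homeomorphism `h : X̄₁ → X̄₂` with `h ∘ ι₁ = ι₂` and
`f̄₂ ∘ h = f̄₁`. -/
theorem proper_compactification_unique
    {X Z : Type u} [TopologicalSpace X] [TopologicalSpace Z] [T2Space Z]
    [LocallyCompactSpace Z]
    (C : Set Z) (hC : IsClosed C) (f : X → Z) (hf : Continuous f)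
    (hrange : ∀ x, f x ∉ C)
    (hproper : ∀ K : Set Z, IsCompact K → Disjoint K C → IsCompact (f ⁻¹' K))
    (X1 : Type u) [TopologicalSpace X1] [T2Space X1]
    (ι₁ : X → X1) (f1 : X1 → Z)
    (hι₁ : Topology.IsOpenEmbedding ι₁) (hf1 : Continuous f1)
    (hf1proper : ∀ K : Set Z, IsCompact K → IsCompact (f1 ⁻¹' K))
    (hcomm1 : f1 ∘ ι₁ = f)
    (hbij1 : Set.BijOn f1 ((Set.range ι₁)ᶜ) C)
    (X2 : Type u) [TopologicalSpace X2] [T2Space X2]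
    (ι₂ : X → X2) (f2 : X2 → Z)
    (hι₂ : Topology.IsOpenEmbedding ι₂) (hf2 : Continuous f2)
    (hf2proper : ∀ K : Set Z, IsCompact K → IsCompact (f2 ⁻¹' K))
    (hcomm2 : f2 ∘ ι₂ = f)
    (hbij2 : Set.BijOn f2 ((Set.range ι₂)ᶜ) C) :
    ∃! h : X1 ≃ₜ X2, (∀ x, h (ι₁ x) = ι₂ x) ∧ ∀ p, f2 (h p) = f1 p := by
  obtain ⟨g, hgcont, hgι, hgf, hgc⟩ := aux_exists C f hrange ι₁ f1 hι₁ hf1 hcomm1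
    (fun p hp => hbij1.mapsTo hp) ι₂ f2 hι₂.continuous hf2 hf2proper hcomm2 hbij2
  obtain ⟨g', hg'cont, hg'ι, hg'f, hg'c⟩ := aux_exists C f hrange ι₂ f2 hι₂ hf2 hcomm2
    (fun p hp => hbij2.mapsTo hp) ι₁ f1 hι₁.continuous hf1 hf1proper hcomm1 hbij1
  have hleft : ∀ p, g' (g p) = p := by
    intro p
    by_cases hp : p ∈ Set.range ι₁
    · obtain ⟨x, rfl⟩ := hp
      rw [hgι x, hg'ι x]
    · exact hbij1.injOn (hg'c (g p) (hgc p hp)) hp (by rw [hg'f, hgf])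
  have hright : ∀ q, g (g' q) = q := by
    intro q
    by_cases hq : q ∈ Set.range ι₂
    · obtain ⟨x, rfl⟩ := hq
      rw [hg'ι x, hgι x]
    · exact hbij2.injOn (hgc (g' q) (hg'c q hq)) hq (by rw [hgf, hg'f])
  refine ⟨⟨⟨g, g', hleft, hright⟩, hgcont, hg'cont⟩, ⟨hgι, hgf⟩, ?_⟩
  rintro h ⟨hhι, hhf⟩
  apply Homeomorph.ext
  intro p
  by_cases hp : p ∈ Set.range ι₁
  · obtain ⟨x, rfl⟩ := hp
    show h (ι₁ x) = g (ι₁ x)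
    rw [hhι x, hgι x]
  · have hhp : h p ∉ Set.range ι₂ := by
      rintro ⟨y, hy⟩
      have : f y = f1 p := by rw [← hhf p, ← hy]; exact (congrFun hcomm2 y).symm
      exact hrange y (this ▸ hbij1.mapsTo hp)
    show h p = g p
    exact hbij2.injOn hhp (hgc p hp) (by rw [hhf, hgf])
end
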